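/- arXiv:1605.00705 — 3 statements merged into one kernel-verified Lean document; each statement's English description precedes it below -/
import Mathlib

section
/- Let P be an irreducible row-stochastic M×M matrix with stationary distribution π. Then the set {θ > 0 : Λ_A(θ,P) < θ·c} is empty (equivalently θ*(P) = 0) if and only if Σ_i π_i·r_i ≥ c. In particular θ*(P) > 0 whenever the stationary mean arrival rate is strictly less than the service rate c. -/
/-!
Write `m = ∑ π i r i`. The tilted matrix `Π_θ = PiMat r θ P` is nonnegative and irreducible, so
by Perron–Frobenius it has an eigenvalue `ρ_θ > 0` with a positive eigenvector `v`, and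
`Λ_A(θ) = log ρ_θ`. Jensen's inequality for `log` in each row of `Π_θ v = ρ_θ v`, averaged
against `π`, gives `θ m ≤ Λ_A(θ)` for every `θ`; so the set is empty when `m ≥ c`.
Conversely, if `m < c`, let `h` solve the Poisson equation `h - P h = P r - m`. Then
`exp (θ h)` is a positive test vector with `Π_θ exp (θ h) ≤ exp (θ m + O(θ²)) exp (θ h)`,
which bounds `ρ_θ`, so `Λ_A(θ) < θ c` for small `θ > 0`.
-/

open scoped BigOperators Classical
open Filter

noncomputable section

def IsRowStochastic {M : ℕ} (P : Matrix (Fin M) (Fin M) ℝ) : Prop :=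
  (∀ i j, 0 ≤ P i j) ∧ ∀ i, ∑ j, P i j = 1

def IsIrreducibleMat {M : ℕ} (P : Matrix (Fin M) (Fin M) ℝ) : Prop :=
  ∀ i j, ∃ n : ℕ, 1 ≤ n ∧ 0 < (P ^ n) i j

def IsStationaryDist {M : ℕ} (P : Matrix (Fin M) (Fin M) ℝ) (π : Fin M → ℝ) : Prop :=
  (∀ i, 0 ≤ π i) ∧ (∑ i, π i = 1) ∧ ∀ j, ∑ i, π i * P i j = π j

def PiMat {M : ℕ} (r : Fin M → ℝ) (θ : ℝ) (A : Matrix (Fin M) (Fin M) ℝ) :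
    Matrix (Fin M) (Fin M) ℝ :=
  Matrix.of fun i j => A i j * Real.exp (θ * r j)

def LambdaA {M : ℕ} (r : Fin M → ℝ) (θ : ℝ) (A : Matrix (Fin M) (Fin M) ℝ) : ℝ :=
  Real.log ((spectralRadius ℝ (PiMat r θ A)).toReal)

def thetaStar {M : ℕ} (r : Fin M → ℝ) (c : ℝ) (A : Matrix (Fin M) (Fin M) ℝ) : ℝ :=
  sSup ({0} ∪ {θ : ℝ | 0 < θ ∧ LambdaA r θ A < θ * c})

def q1 {M : ℕ} (q : Fin M → Fin M → ℝ) (i : Fin M) : ℝ := ∑ j, q i j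

def qf {M : ℕ} (q : Fin M → Fin M → ℝ) (i j : Fin M) : ℝ := q i j / q1 q i

def Qf {M : ℕ} (q : Fin M → Fin M → ℝ) : Matrix (Fin M) (Fin M) ℝ :=
  Matrix.of fun i j => qf q i j

def Dset {M : ℕ} (q : Fin M → Fin M → ℝ) : Set (Matrix (Fin M) (Fin M) ℝ) :=
  {p | IsRowStochastic p ∧ ∀ i j, 0 < q i j → 0 < p i j}

def I3hat {M : ℕ} (q : Fin M → Fin M → ℝ) (p : Matrix (Fin M) (Fin M) ℝ) : ℝ :=
  ∑ i, q1 q i * ∑ j ∈ Finset.univ.filter (fun j => 0 < q i j),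
    qf q i j * Real.log (qf q i j / p i j)

def thetaBar {M : ℕ} (r : Fin M → ℝ) (c : ℝ) (q : Fin M → Fin M → ℝ) (l s : ℝ)
    (p : Matrix (Fin M) (Fin M) ℝ) : ℝ :=
  l * s * thetaStar r c p + I3hat q p

def I1set {M : ℕ} (r : Fin M → ℝ) (c : ℝ) : Set (Matrix (Fin M) (Fin M) ℝ) :=
  {P | IsRowStochastic P ∧ IsIrreducibleMat P ∧ ∃ π, IsStationaryDist P π ∧ ∑ i, π i * r i < c}

def I2set {M : ℕ} (r : Fin M → ℝ) (c : ℝ) : Set (Matrix (Fin M) (Fin M) ℝ) :=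
  {P | IsRowStochastic P ∧ IsIrreducibleMat P ∧ ∃ π, IsStationaryDist P π ∧ c < ∑ i, π i * r i}

def I3set {M : ℕ} (r : Fin M → ℝ) (c : ℝ) : Set (Matrix (Fin M) (Fin M) ℝ) :=
  {P | IsRowStochastic P ∧ IsIrreducibleMat P ∧ ∃ π, IsStationaryDist P π ∧ ∑ i, π i * r i = c}

def toMat {M : ℕ} (x : EuclideanSpace ℝ (Fin M × Fin M)) : Matrix (Fin M) (Fin M) ℝ :=
  Matrix.of fun i j => x (i, j)

def toEuc {M : ℕ} (A : Matrix (Fin M) (Fin M) ℝ) : EuclideanSpace ℝ (Fin M × Fin M) :=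
  (WithLp.equiv 2 ((Fin M × Fin M) → ℝ)).symm (fun ij => A ij.1 ij.2)

def frobInner {M : ℕ} (A B : Matrix (Fin M) (Fin M) ℝ) : ℝ := ∑ i, ∑ j, A i j * B i j

open Matrix Finset

section NonnegativeMatrix

variable {n : Type*} [Fintype n]

theorem Matrix.mem_spectrum_iff_exists_mulVec_eq_smul [DecidableEq n] {A : Matrix n n ℝ}
    {μ : ℝ} : μ ∈ spectrum ℝ A ↔ ∃ x ≠ 0, A *ᵥ x = μ • x := by
  rw [← Matrix.spectrum_toLin', ← Module.End.hasEigenvalue_iff_mem_spectrum,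
    Module.End.hasEigenvalue_iff, Submodule.ne_bot_iff]
  simp only [Module.End.mem_eigenspace_iff, Matrix.toLin'_apply]
  exact ⟨fun ⟨x, hx, hx0⟩ => ⟨x, hx0, hx⟩, fun ⟨x, hx0, hx⟩ => ⟨x, hx, hx0⟩⟩

theorem Matrix.mulVec_apply_pos {A : Matrix n n ℝ} {v : n → ℝ} {i : n}
    (hA : ∀ j, 0 ≤ A i j) (hv : ∀ j, 0 ≤ v j) (h : ∃ j, 0 < A i j ∧ 0 < v j) :
    0 < (A *ᵥ v) i := by
  obtain ⟨j, hAj, hvj⟩ := h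
  exact sum_pos' (fun k _ => mul_nonneg (hA k) (hv k)) ⟨j, mem_univ j, mul_pos hAj hvj⟩

theorem Matrix.mulVec_pos_of_pos {B : Matrix n n ℝ} (hB : ∀ i j, 0 < B i j) {y : n → ℝ}
    (hy : 0 ≤ y) (hy0 : y ≠ 0) (i : n) : 0 < (B *ᵥ y) i := by
  obtain ⟨j, hj⟩ := Function.ne_iff.mp hy0
  exact mulVec_apply_pos (fun j => (hB i j).le) hy ⟨j, hB i j, (hy j).lt_of_ne' hj⟩

theorem Matrix.mulVec_nonneg {A : Matrix n n ℝ} (hA : ∀ i j, 0 ≤ A i j) {v : n → ℝ}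
    (hv : 0 ≤ v) : 0 ≤ A *ᵥ v :=
  fun i => sum_nonneg fun j _ => mul_nonneg (hA i j) (hv j)

theorem abs_le_of_mulVec_le_smul {A : Matrix n n ℝ} (hA : ∀ i j, 0 ≤ A i j) {v : n → ℝ}
    (hv : ∀ i, 0 < v i) {t : ℝ} (hAv : A *ᵥ v ≤ t • v) {x : n → ℝ} (hx : x ≠ 0) {μ : ℝ}
    (hAx : A *ᵥ x = μ • x) : |μ| ≤ t := by
  have : Nonempty n := (Function.ne_iff.mp hx).nonempty
  obtain ⟨i, -, hi⟩ := exists_max_image univ (fun i => |x i| / v i) univ_nonempty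
  set β := |x i| / v i
  have hxβ : ∀ j, |x j| ≤ β * v j := fun j =>
    (div_le_iff₀ (hv j)).mp (hi j (mem_univ j))
  have hβ : 0 < β := by
    obtain ⟨j, hj⟩ := Function.ne_iff.mp hx
    exact (div_pos (abs_pos.mpr hj) (hv j)).trans_le (hi j (mem_univ j))
  have key : |μ| * (β * v i) ≤ t * (β * v i) := calc
    |μ| * (β * v i) = |(A *ᵥ x) i| := by
      rw [hAx, Pi.smul_apply, smul_eq_mul, abs_mul, div_mul_cancel₀ _ (hv i).ne']
    _ ≤ ∑ j, A i j * |x j| := by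
      simp only [mulVec, dotProduct]
      refine (abs_sum_le_sum_abs _ _).trans_eq (sum_congr rfl fun j _ => ?_)
      rw [abs_mul, abs_of_nonneg (hA i j)]
    _ ≤ ∑ j, A i j * (β * v j) := sum_le_sum fun j _ => mul_le_mul_of_nonneg_left (hxβ j) (hA i j)
    _ = β * (A *ᵥ v) i := by
      simp only [mulVec, dotProduct, mul_sum]
      exact sum_congr rfl fun j _ => by ring
    _ ≤ β * (t * v i) := mul_le_mul_of_nonneg_left (hAv i) hβ.le
    _ = t * (β * v i) := by ring
  exact le_of_mul_le_mul_right key (mul_pos hβ (hv i))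

theorem spectralRadius_eq_ofReal_of_mulVec_eq_smul [DecidableEq n] [Nonempty n] {A : Matrix n n ℝ}
    (hA : ∀ i j, 0 ≤ A i j) {v : n → ℝ} (hv : ∀ i, 0 < v i) {ρ : ℝ} (hρ : 0 ≤ ρ)
    (hAv : A *ᵥ v = ρ • v) : spectralRadius ℝ A = ENNReal.ofReal ρ := by
  have hv0 : v ≠ 0 := Function.ne_iff.mpr ⟨Classical.arbitrary n, (hv _).ne'⟩
  refine le_antisymm (iSup₂_le fun μ hμ => ?_) ?_
  · obtain ⟨x, hx, hAx⟩ := mem_spectrum_iff_exists_mulVec_eq_smul.mp hμ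
    rw [← enorm_eq_nnnorm, Real.enorm_eq_ofReal_abs]
    exact ENNReal.ofReal_le_ofReal (abs_le_of_mulVec_le_smul hA hv hAv.le hx hAx)
  · have hmem : ρ ∈ spectrum ℝ A := mem_spectrum_iff_exists_mulVec_eq_smul.mpr ⟨v, hv0, hAv⟩
    have := le_iSup₂ (f := fun (μ : ℝ) (_ : μ ∈ spectrum ℝ A) => (‖μ‖₊ : ENNReal)) ρ hmem
    rwa [← enorm_eq_nnnorm, Real.enorm_eq_ofReal_abs, abs_of_nonneg hρ] at this

theorem Matrix.pow_apply_le_add_one_pow_apply [DecidableEq n] {A : Matrix n n ℝ}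
    (hA : ∀ i j, 0 ≤ A i j) {k N : ℕ} (hkN : k ≤ N) (i j : n) :
    (A ^ k) i j ≤ ((A + 1) ^ N) i j := by
  rw [(Commute.one_right A).add_pow']
  simp only [Matrix.sum_apply, one_pow, mul_one, Matrix.smul_apply]
  have hk : (k, N - k) ∈ antidiagonal N := mem_antidiagonal.mpr (Nat.add_sub_cancel' hkN)
  calc (A ^ k) i j ≤ N.choose k • (A ^ k) i j := by
        rw [nsmul_eq_mul]
        exact le_mul_of_one_le_left (pow_apply_nonneg hA k i j)
          (by exact_mod_cast Nat.choose_pos hkN)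
    _ ≤ _ := single_le_sum (f := fun p : ℕ × ℕ => N.choose p.1 • (A ^ p.1) i j)
        (fun p _ => nsmul_nonneg (pow_apply_nonneg hA p.1 i j) _) hk

theorem Matrix.IsIrreducible.exists_add_one_pow_pos [DecidableEq n] {A : Matrix n n ℝ}
    (hA : A.IsIrreducible) : ∃ N : ℕ, ∀ i j, 0 < ((A + 1) ^ N) i j := by
  choose k _ hAk using (isIrreducible_iff_exists_pow_pos hA.nonneg).mp hA
  refine ⟨univ.sup fun p : n × n => k p.1 p.2, fun i j => (hAk i j).trans_le ?_⟩
  exact pow_apply_le_add_one_pow_apply hA.nonneg (le_sup (f := fun p : n × n => k p.1 p.2)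
    (mem_univ (i, j))) i j

theorem Matrix.pow_mulVec_of_mulVec_eq_smul [DecidableEq n] {A : Matrix n n ℝ} {x : n → ℝ} {μ : ℝ}
    (h : A *ᵥ x = μ • x) (k : ℕ) : (A ^ k) *ᵥ x = μ ^ k • x := by
  induction k with
  | zero => simp
  | succ k ih => rw [pow_succ', ← mulVec_mulVec, ih, mulVec_smul, h, smul_smul, pow_succ]

theorem inv_sum_smul_mem_stdSimplex {w : n → ℝ} (hw : 0 ≤ w) (hw0 : 0 < ∑ i, w i) :
    (∑ i, w i)⁻¹ • w ∈ stdSimplex ℝ n :=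
  ⟨fun i => mul_nonneg (inv_nonneg.mpr hw0.le) (hw i), by
    simp only [Pi.smul_apply, smul_eq_mul, ← mul_sum, inv_mul_cancel₀ hw0.ne']⟩

theorem ne_zero_of_mem_stdSimplex {x : n → ℝ} (hx : x ∈ stdSimplex ℝ n) : x ≠ 0 :=
  fun h => by simpa [h] using hx.2

theorem le_sum_sum_of_smul_le_mulVec {A : Matrix n n ℝ} (hA : ∀ i j, 0 ≤ A i j) {v : n → ℝ}
    (hv : v ∈ stdSimplex ℝ n) {t : ℝ} (h : t • v ≤ A *ᵥ v) : t ≤ ∑ i, ∑ j, A i j := calc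
  t = ∑ i, t * v i := by rw [← mul_sum, hv.2, mul_one]
  _ ≤ ∑ i, ∑ j, A i j * v j := sum_le_sum fun i _ => h i
  _ ≤ ∑ i, ∑ j, A i j := sum_le_sum fun i _ => sum_le_sum fun j _ =>
      mul_le_of_le_one_right (hA i j) (mem_Icc_of_mem_stdSimplex hv j).2

theorem Matrix.exists_isGreatest_smul_le_mulVec [Nonempty n] {A : Matrix n n ℝ}
    (hA : ∀ i j, 0 ≤ A i j) :
    ∃ ρ, IsGreatest {t : ℝ | ∃ v ∈ stdSimplex ℝ n, t • v ≤ A *ᵥ v} ρ := by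
  set R := ∑ i, ∑ j, A i j
  set K := (Set.Icc 0 R ×ˢ stdSimplex ℝ n) ∩ {p : ℝ × (n → ℝ) | p.1 • p.2 ≤ A *ᵥ p.2}
  have hK : IsCompact K := (isCompact_Icc.prod (isCompact_stdSimplex ℝ n)).inter_right
    (isClosed_le (by fun_prop) (by fun_prop))
  obtain ⟨i⟩ := ‹Nonempty n›
  have hv₀ : Pi.single i 1 ∈ stdSimplex ℝ n := single_mem_stdSimplex ℝ i
  have hK₀ : ((0 : ℝ), (Pi.single i 1 : n → ℝ)) ∈ K :=
    ⟨⟨⟨le_rfl, sum_nonneg fun i _ => sum_nonneg fun j _ => hA i j⟩, hv₀⟩,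
      by simpa using mulVec_nonneg hA hv₀.1⟩
  obtain ⟨⟨ρ, x⟩, ⟨⟨⟨hρ₀, -⟩, hx⟩, hρx⟩, hmax⟩ :=
    hK.exists_isMaxOn ⟨_, hK₀⟩ continuous_fst.continuousOn
  refine ⟨ρ, ⟨x, hx, hρx⟩, fun t ⟨v, hv, htv⟩ => ?_⟩
  rcases lt_or_ge t 0 with ht | ht
  · linarith
  · exact hmax (show (t, v) ∈ K from ⟨⟨⟨ht, le_sum_sum_of_smul_le_mulVec hA hv htv⟩, hv⟩, htv⟩)

theorem exists_pos_smul_le {w z : n → ℝ} (hw : ∀ i, 0 < w i) (hz : ∀ i, 0 < z i) :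
    ∃ ε : ℝ, 0 < ε ∧ ε • w ≤ z := by
  obtain ⟨ε, hε, hεz⟩ : ∃ ε : ℝ, 0 < ε ∧ ∀ i, ε ≤ z i / w i := by
    rcases isEmpty_or_nonempty n with hn | hn
    · exact ⟨1, one_pos, fun i => (IsEmpty.false i).elim⟩
    obtain ⟨i, -, hi⟩ := exists_min_image univ (fun i => z i / w i) univ_nonempty
    exact ⟨_, div_pos (hz i) (hw i), fun j => hi j (mem_univ j)⟩
  exact ⟨ε, hε, fun i => (le_div_iff₀ (hw i)).mp (hεz i)⟩

/-- The maximiser of the Collatz–Wielandt problem is an eigenvector: otherwise applying a positive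
matrix commuting with `A` produces a strictly better feasible vector. -/
theorem Matrix.mulVec_eq_smul_of_isGreatest {A B : Matrix n n ℝ} (hB : ∀ i j, 0 < B i j)
    (hAB : Commute A B) {ρ : ℝ} (hρ : IsGreatest {t : ℝ | ∃ v ∈ stdSimplex ℝ n, t • v ≤ A *ᵥ v} ρ)
    {x : n → ℝ} (hx : x ∈ stdSimplex ℝ n) (hρx : ρ • x ≤ A *ᵥ x) : A *ᵥ x = ρ • x := by
  by_contra hne
  set u := A *ᵥ x - ρ • x
  have hx0 := ne_zero_of_mem_stdSimplex hx
  obtain ⟨ε, hε, hεu⟩ := exists_pos_smul_le (mulVec_pos_of_pos hB hx.1 hx0) (mulVec_pos_of_pos hB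
    (sub_nonneg.mpr hρx) (sub_ne_zero.mpr hne))
  set w := B *ᵥ x
  have hAw : A *ᵥ w = ρ • w + B *ᵥ u := by
    rw [mulVec_mulVec, hAB.eq, ← mulVec_mulVec, ← mulVec_smul, ← mulVec_add, add_sub_cancel]
  have hw : (ρ + ε) • w ≤ A *ᵥ w := by
    rw [hAw, add_smul]
    exact add_le_add_right hεu _
  have hw₀ : 0 ≤ w := fun i => (mulVec_pos_of_pos hB hx.1 hx0 i).le
  have hwsum : 0 < ∑ i, w i := sum_pos (fun i _ => mulVec_pos_of_pos hB hx.1 hx0 i)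
    (univ_nonempty_iff.mpr (Function.ne_iff.mp hx0).nonempty)
  have : ρ + ε ≤ ρ := hρ.2 ⟨_, inv_sum_smul_mem_stdSimplex hw₀ hwsum, by
    rw [mulVec_smul, smul_comm]
    exact smul_le_smul_of_nonneg_left hw (inv_nonneg.mpr hwsum.le)⟩
  linarith

theorem Matrix.IsIrreducible.exists_pos_eigenvector [DecidableEq n] [Nonempty n] {A : Matrix n n ℝ}
    (hA : A.IsIrreducible) : ∃ ρ : ℝ, 0 ≤ ρ ∧ ∃ v : n → ℝ, (∀ i, 0 < v i) ∧ A *ᵥ v = ρ • v := by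
  obtain ⟨N, hN⟩ := hA.exists_add_one_pow_pos
  obtain ⟨ρ, hρ⟩ := exists_isGreatest_smul_le_mulVec hA.nonneg
  obtain ⟨x, hx, hρx⟩ := hρ.1
  have hAx := mulVec_eq_smul_of_isGreatest hN
    (((Commute.refl A).add_right (Commute.one_right A)).pow_right N) hρ hx hρx
  have hρ₀ : 0 ≤ ρ := hρ.2 ⟨x, hx, by simpa using mulVec_nonneg hA.nonneg hx.1⟩
  refine ⟨ρ, hρ₀, x, fun i => ?_, hAx⟩
  have hBx := pow_mulVec_of_mulVec_eq_smul (show (A + 1) *ᵥ x = (ρ + 1) • x by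
    rw [add_mulVec, one_mulVec, hAx, add_smul, one_smul]) N
  have := mulVec_pos_of_pos hN hx.1 (ne_zero_of_mem_stdSimplex hx) i
  rw [hBx, Pi.smul_apply, smul_eq_mul] at this
  exact pos_of_mul_pos_right this (by positivity)

end NonnegativeMatrix

section Markov

variable {n : Type*} [Fintype n] [DecidableEq n] {P : Matrix n n ℝ}

theorem Matrix.IsIrreducible.eq_of_mulVec_eq_self (hP : P ∈ rowStochastic ℝ n)
    (hirr : P.IsIrreducible) {h : n → ℝ} (hh : P *ᵥ h = h) (i j : n) : h i = h j := by
  obtain ⟨i₀, -, hmax⟩ := exists_max_image univ h ⟨i, mem_univ i⟩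
  suffices ∀ j, h j = h i₀ by rw [this i, this j]
  intro j
  obtain ⟨k, -, hk⟩ := (isIrreducible_iff_exists_pow_pos hirr.nonneg).mp hirr i₀ j
  have hPk : P ^ k ∈ rowStochastic ℝ n := pow_mem hP k
  have hfix : (P ^ k) *ᵥ h = h := by
    simpa using pow_mulVec_of_mulVec_eq_smul (μ := 1) (by simpa using hh) k
  have hzero : ∑ l, (P ^ k) i₀ l * (h i₀ - h l) = 0 := by
    simp only [mul_sub, sum_sub_distrib, ← sum_mul, sum_row_of_mem_rowStochastic hPk, one_mul]
    rw [sub_eq_zero]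
    exact (congrFun hfix i₀).symm
  have hj := (sum_eq_zero_iff_of_nonneg fun l _ => mul_nonneg (nonneg_of_mem_rowStochastic hPk)
    (sub_nonneg.mpr (hmax l (mem_univ l)))).mp hzero j (mem_univ j)
  linarith [(mul_eq_zero.mp hj).resolve_left hk.ne']

/-- `ker (1 - P)` is the line of constants, so `range (1 - P)` is a hyperplane; it lies in the
hyperplane `π⊥`, hence equals it. -/
theorem Matrix.IsIrreducible.exists_sub_mulVec_eq (hP : P ∈ rowStochastic ℝ n)
    (hirr : P.IsIrreducible) {π : n → ℝ} (hπ : π ≠ 0) (hπP : π ᵥ* P = π) {g : n → ℝ}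
    (hg : π ⬝ᵥ g = 0) : ∃ h, h - P *ᵥ h = g := by
  obtain ⟨i⟩ := (Function.ne_iff.mp hπ).nonempty
  set f := (1 - P).mulVecLin
  set φ := dotProductEquiv ℝ n π
  have hf : ∀ h, f h = h - P *ᵥ h := fun h => by simp [f]
  have hker : LinearMap.ker f = ℝ ∙ (1 : n → ℝ) := by
    ext h
    rw [LinearMap.mem_ker, hf, sub_eq_zero, Submodule.mem_span_singleton]
    constructor
    · intro hh
      exact ⟨h i, funext fun j => by simp [hirr.eq_of_mulVec_eq_self hP hh.symm i j]⟩
    · rintro ⟨a, rfl⟩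
      rw [mulVec_smul, one_vecMul_of_mem_rowStochastic hP]
  have hrange : LinearMap.range f ≤ LinearMap.ker φ := by
    rintro _ ⟨h, rfl⟩
    simp [φ, hf, dotProduct_sub, dotProduct_mulVec, hπP]
  have hφ : LinearMap.ker φ ≠ ⊤ := by
    intro htop
    exact hπ ((dotProductEquiv ℝ n).map_eq_zero_iff.mp (LinearMap.ker_eq_top.mp htop))
  have hdim := LinearMap.finrank_range_add_finrank_ker f
  rw [hker, finrank_span_singleton (Function.ne_iff.mpr ⟨i, one_ne_zero⟩)] at hdim
  have := Submodule.finrank_lt hφ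
  have hg' : g ∈ LinearMap.range f := by
    rw [Submodule.eq_of_le_of_finrank_le hrange (by omega)]
    simpa [φ] using hg
  obtain ⟨h, rfl⟩ := hg'
  exact ⟨h, (hf h).symm⟩

end Markov

theorem sum_mul_exp_le_exp {ι : Type*} [Fintype ι] {p y : ι → ℝ} (hp : ∀ j, 0 ≤ p j)
    (hp1 : ∑ j, p j = 1) {δ : ℝ} (hδ : δ ≤ 1) (hy : ∀ j, |y j - ∑ k, p k * y k| ≤ δ) :
    ∑ j, p j * Real.exp (y j) ≤ Real.exp (∑ j, p j * y j + δ ^ 2) := by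
  set a := ∑ j, p j * y j
  have hexp : ∀ j, Real.exp (y j) ≤ Real.exp a * (1 + (y j - a) + δ ^ 2) := fun j => by
    have hz := Real.abs_exp_sub_one_sub_id_le ((hy j).trans hδ)
    have hsq : (y j - a) ^ 2 ≤ δ ^ 2 := by
      rw [← sq_abs]
      exact pow_le_pow_left₀ (abs_nonneg _) (hy j) 2
    rw [show y j = a + (y j - a) by ring, Real.exp_add, add_sub_cancel_left]
    exact mul_le_mul_of_nonneg_left (by linarith [(abs_le.mp hz).2]) (Real.exp_pos a).le
  calc ∑ j, p j * Real.exp (y j) ≤ ∑ j, p j * (Real.exp a * (1 + (y j - a) + δ ^ 2)) :=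
        sum_le_sum fun j _ => mul_le_mul_of_nonneg_left (hexp j) (hp j)
    _ = Real.exp a * ((1 - a + δ ^ 2) * ∑ j, p j + a) := by
        rw [mul_sum, mul_add, mul_sum, mul_sum, ← sum_add_distrib]
        exact sum_congr rfl fun j _ => by ring
    _ = Real.exp a * (1 + δ ^ 2) := by rw [hp1]; ring
    _ ≤ Real.exp a * Real.exp (δ ^ 2) := by
        gcongr
        linarith [Real.add_one_le_exp (δ ^ 2)]
    _ = Real.exp (a + δ ^ 2) := (Real.exp_add _ _).symm

theorem Matrix.IsIrreducible.of_pos_iff {n : Type*} {A B : Matrix n n ℝ} (hA : A.IsIrreducible)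
    (hB : ∀ i j, 0 ≤ B i j) (hAB : ∀ i j, 0 < B i j ↔ 0 < A i j) : B.IsIrreducible := by
  have hq : B.toQuiver = A.toQuiver := by
    unfold Matrix.toQuiver
    congr
    funext i j
    rw [hAB]
  exact ⟨hB, hq ▸ hA.connected⟩

section Tilted

variable {M : ℕ} {P : Matrix (Fin M) (Fin M) ℝ} {π : Fin M → ℝ}

theorem IsRowStochastic.mem_rowStochastic (hP : IsRowStochastic P) :
    P ∈ rowStochastic ℝ (Fin M) :=
  mem_rowStochastic_iff_sum.mpr hP

theorem IsIrreducibleMat.isIrreducible (hP : ∀ i j, 0 ≤ P i j) (hirr : IsIrreducibleMat P) :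
    P.IsIrreducible :=
  (isIrreducible_iff_exists_pow_pos hP).mpr fun i j =>
    let ⟨k, hk, hPk⟩ := hirr i j
    ⟨k, hk, hPk⟩

theorem IsStationaryDist.vecMul_eq (hπ : IsStationaryDist P π) : π ᵥ* P = π :=
  funext hπ.2.2

theorem IsStationaryDist.ne_zero (hπ : IsStationaryDist P π) : π ≠ 0 := by
  rintro rfl
  simpa using hπ.2.1

theorem PiMat_nonneg (hP : ∀ i j, 0 ≤ P i j) (r : Fin M → ℝ) (θ : ℝ) (i j : Fin M) :
    0 ≤ PiMat r θ P i j :=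
  mul_nonneg (hP i j) (Real.exp_pos _).le

theorem IsIrreducibleMat.isIrreducible_PiMat (hP : ∀ i j, 0 ≤ P i j) (hirr : IsIrreducibleMat P)
    (r : Fin M → ℝ) (θ : ℝ) : (PiMat r θ P).IsIrreducible :=
  (hirr.isIrreducible hP).of_pos_iff (PiMat_nonneg hP r θ) fun _ _ =>
    mul_pos_iff_of_pos_right (Real.exp_pos _)

theorem exists_LambdaA_eq_log_eigenvalue [Nonempty (Fin M)] (hP : IsRowStochastic P)
    (hirr : IsIrreducibleMat P) (r : Fin M → ℝ) (θ : ℝ) :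
    ∃ ρ : ℝ, 0 < ρ ∧ LambdaA r θ P = Real.log ρ ∧
      ∃ v : Fin M → ℝ, (∀ i, 0 < v i) ∧ PiMat r θ P *ᵥ v = ρ • v := by
  obtain ⟨ρ, hρ, v, hv, hPv⟩ := (hirr.isIrreducible_PiMat hP.1 r θ).exists_pos_eigenvector
  refine ⟨ρ, ?_, ?_, v, hv, hPv⟩
  · obtain ⟨i⟩ := ‹Nonempty (Fin M)›
    obtain ⟨j, -, hj⟩ := exists_lt_of_sum_lt (s := univ) (f := 0) (g := P i) (by simp [hP.2 i])
    have := mulVec_apply_pos (PiMat_nonneg hP.1 r θ i) (fun j => (hv j).le)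
      ⟨j, mul_pos hj (Real.exp_pos _), hv j⟩
    rw [hPv, Pi.smul_apply, smul_eq_mul] at this
    exact pos_of_mul_pos_left this (hv i).le
  · rw [LambdaA, spectralRadius_eq_ofReal_of_mulVec_eq_smul (PiMat_nonneg hP.1 r θ) hv hρ hPv,
      ENNReal.toReal_ofReal hρ]

theorem mul_sum_le_LambdaA (hP : IsRowStochastic P) (hirr : IsIrreducibleMat P)
    (hπ : IsStationaryDist P π) (r : Fin M → ℝ) (θ : ℝ) :
    θ * ∑ i, π i * r i ≤ LambdaA r θ P := by
  have : Nonempty (Fin M) := (Function.ne_iff.mp hπ.ne_zero).nonempty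
  obtain ⟨ρ, hρ, hΛ, v, hv, hPv⟩ := exists_LambdaA_eq_log_eigenvalue hP hirr r θ
  set x : Fin M → ℝ := fun j => θ * r j + Real.log (v j)
  have hrow : P *ᵥ x ≤ fun i => Real.log ρ + Real.log (v i) := fun i => by
    have hJ := strictConcaveOn_log_Ioi.concaveOn.le_map_sum (t := univ) (w := P i)
      (p := fun j => Real.exp (θ * r j) * v j) (fun j _ => hP.1 i j) (hP.2 i)
      (fun j _ => mul_pos (Real.exp_pos _) (hv j))
    have hsum : ∑ j, P i j • (Real.exp (θ * r j) * v j) = ρ * v i := by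
      rw [← smul_eq_mul, ← Pi.smul_apply, ← hPv]
      exact sum_congr rfl fun j _ => by simp [PiMat, mul_assoc]
    rw [hsum, Real.log_mul hρ.ne' (hv i).ne'] at hJ
    change ∑ j, P i j * x j ≤ _
    refine le_of_eq_of_le (sum_congr rfl fun j _ => ?_) hJ
    rw [smul_eq_mul, Real.log_mul (Real.exp_pos _).ne' (hv j).ne', Real.log_exp]
  have hπx := dotProduct_le_dotProduct_of_nonneg_left hrow hπ.1
  rw [dotProduct_mulVec, hπ.vecMul_eq] at hπx
  simp only [x, dotProduct, mul_add, sum_add_distrib, ← sum_mul, hπ.2.1, one_mul] at hπx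
  rw [hΛ, mul_sum]
  linarith [show ∑ i, π i * (θ * r i) = ∑ i, θ * (π i * r i) from sum_congr rfl fun i _ => by ring]

theorem PiMat_mulVec_exp_le (hP : IsRowStochastic P) {r h : Fin M → ℝ} {m : ℝ}
    (hrh : ∀ i, (P *ᵥ (r + h)) i = m + h i) {D : ℝ} (hD : ∀ i j, |r j + h j - (m + h i)| ≤ D)
    {θ : ℝ} (hθ : 0 ≤ θ) (hθD : θ * D ≤ 1) :
    PiMat r θ P *ᵥ (fun i => Real.exp (θ * h i)) ≤
      Real.exp (θ * m + (θ * D) ^ 2) • fun i => Real.exp (θ * h i) := fun i => by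
  have hmean : ∑ j, P i j * (θ * (r j + h j)) = θ * (m + h i) := by
    rw [← hrh i, mulVec, dotProduct, mul_sum]
    exact sum_congr rfl fun j _ => by simp only [Pi.add_apply]; ring
  have hJ := sum_mul_exp_le_exp (hP.1 i) (hP.2 i) hθD (y := fun j => θ * (r j + h j))
    fun j => by
      rw [hmean, ← mul_sub, abs_mul, abs_of_nonneg hθ]
      exact mul_le_mul_of_nonneg_left (hD i j) hθ
  rw [hmean] at hJ
  convert hJ using 1
  · simp only [mulVec, dotProduct, PiMat, of_apply, mul_assoc, ← Real.exp_add, mul_add]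
  · rw [Pi.smul_apply, smul_eq_mul, ← Real.exp_add]
    ring_nf

theorem exists_LambdaA_lt_mul (hP : IsRowStochastic P) (hirr : IsIrreducibleMat P)
    (hπ : IsStationaryDist P π) (r : Fin M → ℝ) {c : ℝ} (hc : ∑ i, π i * r i < c) :
    ∃ θ > 0, LambdaA r θ P < θ * c := by
  have : Nonempty (Fin M) := (Function.ne_iff.mp hπ.ne_zero).nonempty
  set m := ∑ i, π i * r i
  obtain ⟨h, hh⟩ := (hirr.isIrreducible hP.1).exists_sub_mulVec_eq hP.mem_rowStochastic
    hπ.ne_zero hπ.vecMul_eq (g := P *ᵥ r - m • 1) (by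
      rw [dotProduct_sub, dotProduct_mulVec, hπ.vecMul_eq, dotProduct_smul, dotProduct_one,
        hπ.2.1, smul_eq_mul, mul_one]
      exact sub_self m)
  have hrh : ∀ i, (P *ᵥ (r + h)) i = m + h i := fun i => by
    have := congrFun hh i
    simp only [Pi.sub_apply, Pi.smul_apply, Pi.one_apply, smul_eq_mul, mul_one] at this
    rw [mulVec_add, Pi.add_apply]
    linarith
  obtain ⟨D₀, hD₀⟩ := Finite.bddAbove_range fun p : Fin M × Fin M =>
    |r p.2 + h p.2 - (m + h p.1)|
  set D := max D₀ 1
  have hD : ∀ i j, |r j + h j - (m + h i)| ≤ D := fun i j =>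
    (hD₀ (Set.mem_range_self (i, j))).trans (le_max_left _ _)
  have hD1 : 1 ≤ D := le_max_right _ _
  set θ := min (1 / D) ((c - m) / (2 * D ^ 2))
  have hθ : 0 < θ := lt_min (by positivity) (div_pos (by linarith) (by positivity))
  have hθD : θ * D ≤ 1 := (le_div_iff₀ (by positivity)).mp (min_le_left _ _)
  have hθD2 : θ * (2 * D ^ 2) ≤ c - m := (le_div_iff₀ (by positivity)).mp (min_le_right _ _)
  obtain ⟨ρ, hρ, hΛ, v, hv, hPv⟩ := exists_LambdaA_eq_log_eigenvalue hP hirr r θ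
  have hρle : ρ ≤ Real.exp (θ * m + (θ * D) ^ 2) :=
    (le_abs_self ρ).trans <| abs_le_of_mulVec_le_smul (PiMat_nonneg hP.1 r θ)
      (fun i => Real.exp_pos _) (PiMat_mulVec_exp_le hP hrh hD hθ.le hθD)
      (Function.ne_iff.mpr ⟨Classical.arbitrary _, (hv _).ne'⟩) hPv
  refine ⟨θ, hθ, ?_⟩
  calc LambdaA r θ P ≤ θ * m + (θ * D) ^ 2 := by
        rw [hΛ, ← Real.log_exp (θ * m + (θ * D) ^ 2)]
        exact Real.log_le_log hρ hρle
    _ < θ * c := by nlinarith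

end Tilted

theorem stmt5_general (M : ℕ) (r : Fin M → ℝ)
    (c : ℝ)
    (P : Matrix (Fin M) (Fin M) ℝ)
    (hPs : IsRowStochastic P) (hPi : IsIrreducibleMat P)
    (π : Fin M → ℝ) (hπ : IsStationaryDist P π)
    (hbdd : BddAbove {θ : ℝ | 0 < θ ∧ LambdaA r θ P < θ * c}) :
    ({θ : ℝ | 0 < θ ∧ LambdaA r θ P < θ * c} = ∅ ↔ c ≤ ∑ i, π i * r i) ∧
    (thetaStar r c P = 0 ↔ c ≤ ∑ i, π i * r i) ∧
    (∑ i, π i * r i < c → 0 < thetaStar r c P) := by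
  have hempty : {θ : ℝ | 0 < θ ∧ LambdaA r θ P < θ * c} = ∅ ↔ c ≤ ∑ i, π i * r i := by
    refine ⟨fun h => not_lt.mp fun hlt => ?_, fun hle => ?_⟩
    · obtain ⟨θ, hθ⟩ := exists_LambdaA_lt_mul hPs hPi hπ r hlt
      exact h.subset hθ
    · refine Set.eq_empty_of_forall_notMem fun θ ⟨hθ, hlt⟩ => ?_
      nlinarith [mul_sum_le_LambdaA hPs hPi hπ r θ]
  have hpos : ∑ i, π i * r i < c → 0 < thetaStar r c P := fun hlt => by
    obtain ⟨θ, hθ⟩ := exists_LambdaA_lt_mul hPs hPi hπ r hlt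
    exact hθ.1.trans_le (le_csSup (bddAbove_singleton.union hbdd) (Or.inr hθ))
  refine ⟨hempty, ⟨fun h0 => not_lt.mp fun hlt => (hpos hlt).ne' h0, fun hle => ?_⟩, hpos⟩
  rw [thetaStar, hempty.mpr hle, Set.union_empty, csSup_singleton]

theorem stmt5 (M : ℕ) (hM : 2 ≤ M) (r : Fin M → ℝ) (hr : ∀ j, 0 ≤ r j)
    (c : ℝ) (hc : 0 < c)
    (P : Matrix (Fin M) (Fin M) ℝ)
    (hPs : IsRowStochastic P) (hPi : IsIrreducibleMat P)
    (π : Fin M → ℝ) (hπ : IsStationaryDist P π)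
    (hbdd : BddAbove {θ : ℝ | 0 < θ ∧ LambdaA r θ P < θ * c}) :
    ({θ : ℝ | 0 < θ ∧ LambdaA r θ P < θ * c} = ∅ ↔ c ≤ ∑ i, π i * r i) ∧
    (thetaStar r c P = 0 ↔ c ≤ ∑ i, π i * r i) ∧
    (∑ i, π i * r i < c → 0 < thetaStar r c P) :=
  stmt5_general M r c P hPs hPi π hπ hbdd
end
end

section
/- Let P be an M×M matrix with nonnegative entries. Then the limiting log-moment generating function θ ↦ Λ_A(θ,P) = log ρ(Π_{θ,P}) is a convex function of θ on ℝ. -/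
open scoped BigOperators Classical
open Filter

noncomputable section

/-!
Write `ρ(θ)` for the spectral radius of `Π_θ = PiMat r θ P`. Entrywise, `Π_{aθ₁+bθ₂}` is the
Hadamard geometric mean `Π_{θ₁}^a ∘ Π_{θ₂}^b`. By Hölder's inequality this domination survives
matrix products, hence holds for all powers and their row sums, i.e. for the `ℓ∞` operator norms
of the powers, and Gelfand's formula turns it into `ρ(aθ₁ + bθ₂) ≤ ρ(θ₁)^a ρ(θ₂)^b` (Kingman).
So `log ρ` is convex: if `ρ` vanishes anywhere, it vanishes everywhere, and `Real.log 0 = 0`.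

Gelfand's formula describes the complex spectral radius, whereas `spectralRadius ℝ` only sees real
eigenvalues. For nonnegative matrices the two agree (weak Perron–Frobenius): for a positive matrix
the moduli of a dominant eigenvector form a Collatz–Wielandt vector, which must be an eigenvector;
a nonnegative `A` is the limit of the positive matrices `A + εJ`, whose dominant real eigenvalues
decrease to a real eigenvalue of `A` that is at least its complex spectral radius.
-/

open Matrix Topology
open scoped ENNReal NNReal

lemma Real.sum_rpow_mul_rpow_le {ι : Type*} (s : Finset ι) {x y : ι → ℝ}
    (hx : ∀ i ∈ s, 0 ≤ x i) (hy : ∀ i ∈ s, 0 ≤ y i) {a b : ℝ} (ha : 0 < a) (hb : 0 < b)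
    (hab : a + b = 1) :
    ∑ i ∈ s, x i ^ a * y i ^ b ≤ (∑ i ∈ s, x i) ^ a * (∑ i ∈ s, y i) ^ b := by
  have := Real.inner_le_Lp_mul_Lq_of_nonneg s (Real.HolderConjugate.inv_inv ha hb hab)
    (fun i hi => Real.rpow_nonneg (hx i hi) a) (fun i hi => Real.rpow_nonneg (hy i hi) b)
  rwa [Finset.sum_congr rfl fun i hi => Real.rpow_rpow_inv (hx i hi) ha.ne',
    Finset.sum_congr rfl fun i hi => Real.rpow_rpow_inv (hy i hi) hb.ne', one_div, one_div,
    inv_inv, inv_inv] at this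

theorem convexOn_log_of_le_rpow_mul_rpow {E : Type*} [AddCommGroup E] [Module ℝ E] {f : E → ℝ}
    (hf : ∀ x, 0 ≤ f x)
    (h : ∀ x y (a b : ℝ), 0 < a → 0 < b → a + b = 1 → f (a • x + b • y) ≤ f x ^ a * f y ^ b) :
    ConvexOn ℝ Set.univ fun x => Real.log (f x) := by
  by_cases hzero : ∃ x₀, f x₀ = 0
  · obtain ⟨x₀, hx₀⟩ := hzero
    -- `x` is the midpoint of `x₀` and `2 • x - x₀`
    have hf0 : ∀ x, f x = 0 := fun x => by
      have hmid := h x₀ (2 • x - x₀) (1 / 2) (1 / 2) (by norm_num) (by norm_num) (by norm_num)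
      rw [show (1 / 2 : ℝ) • x₀ + (1 / 2 : ℝ) • (2 • x - x₀) = x by module, hx₀,
        Real.zero_rpow (by norm_num), zero_mul] at hmid
      exact le_antisymm hmid (hf x)
    simpa [hf0] using convexOn_const (0 : ℝ) (convex_univ (𝕜 := ℝ) (E := E))
  have hpos : ∀ x, 0 < f x := fun x => (hf x).lt_of_ne' fun h0 => hzero ⟨x, h0⟩
  refine convexOn_iff_forall_pos.2 ⟨convex_univ, fun x _ y _ a b ha hb hab => ?_⟩
  calc Real.log (f (a • x + b • y)) ≤ Real.log (f x ^ a * f y ^ b) :=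
        Real.log_le_log (hpos _) (h x y a b ha hb hab)
    _ = a • Real.log (f x) + b • Real.log (f y) := by
        rw [Real.log_mul (Real.rpow_pos_of_pos (hpos x) a).ne'
          (Real.rpow_pos_of_pos (hpos y) b).ne', Real.log_rpow (hpos x), Real.log_rpow (hpos y),
          smul_eq_mul, smul_eq_mul]

namespace Matrix

attribute [local instance] Matrix.linftyOpNormedAddCommGroup Matrix.linftyOpNormedRing
  Matrix.linftyOpNormedAlgebra

section Entrywise

variable {m n : Type*} [Fintype n]

lemma sum_apply_le_linfty_opNorm [Fintype m] (A : Matrix m n ℝ) (i : m) : ∑ j, A i j ≤ ‖A‖ :=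
  calc ∑ j, A i j ≤ ∑ j, ‖A i j‖ := Finset.sum_le_sum fun j _ => Real.le_norm_self _
    _ = ((∑ j, ‖A i j‖₊ : ℝ≥0) : ℝ) := by push_cast; rfl
    _ ≤ ‖A‖ := by
      rw [linfty_opNorm_def, NNReal.coe_le_coe]
      exact Finset.le_sup (f := fun i => ∑ j, ‖A i j‖₊) (Finset.mem_univ i)

lemma linfty_opNorm_le_of_sum_le [Fintype m] {A : Matrix m n ℝ} (hA : ∀ i j, 0 ≤ A i j) {c : ℝ}
    (hc : 0 ≤ c) (h : ∀ i, ∑ j, A i j ≤ c) : ‖A‖ ≤ c := by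
  rw [linfty_opNorm_def, ← Real.coe_toNNReal c hc, NNReal.coe_le_coe]
  refine Finset.sup_le fun i _ => ?_
  rw [← NNReal.coe_le_coe, Real.coe_toNNReal c hc]
  push_cast
  simpa [Real.norm_of_nonneg (hA i _)] using h i

lemma linfty_opNorm_map_ofReal [Fintype m] (A : Matrix m n ℝ) :
    ‖A.map ((↑) : ℝ → ℂ)‖ = ‖A‖ := by
  simp [linfty_opNorm_def]

lemma mulVec_apply_le_mulVec_apply {A : Matrix m n ℝ} (hA : ∀ i j, 0 ≤ A i j) {x y : n → ℝ}
    (hxy : ∀ j, x j ≤ y j) (i : m) : (A *ᵥ x) i ≤ (A *ᵥ y) i :=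
  Finset.sum_le_sum fun j _ => mul_le_mul_of_nonneg_left (hxy j) (hA i j)

lemma mulVec_apply_pos_s7 {B : Matrix m n ℝ} (hB : ∀ i j, 0 < B i j) {w : n → ℝ}
    (hw : ∀ j, 0 ≤ w j) (hw0 : w ≠ 0) (i : m) : 0 < (B *ᵥ w) i := by
  obtain ⟨j, hj⟩ := Function.ne_iff.1 hw0
  exact Finset.sum_pos' (fun k _ => mul_nonneg (hB i k).le (hw k))
    ⟨j, Finset.mem_univ j, mul_pos (hB i j) ((hw j).lt_of_ne' hj)⟩

variable [DecidableEq n]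

lemma pow_apply_le_pow_apply {A B : Matrix n n ℝ} (hA : ∀ i j, 0 ≤ A i j)
    (hAB : ∀ i j, A i j ≤ B i j) (k : ℕ) (i j : n) : (A ^ k) i j ≤ (B ^ k) i j := by
  induction k generalizing j with
  | zero => rfl
  | succ k ih =>
    rw [pow_succ, pow_succ, mul_apply, mul_apply]
    refine Finset.sum_le_sum fun l _ => mul_le_mul (ih l) (hAB l j) (hA l j) ?_
    exact pow_apply_nonneg (fun i j => (hA i j).trans (hAB i j)) k i l

lemma pow_apply_le_rpow_mul_rpow {X Y Z : Matrix n n ℝ} (hX : ∀ i j, 0 ≤ X i j)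
    (hY : ∀ i j, 0 ≤ Y i j) (hZ : ∀ i j, 0 ≤ Z i j) {a b : ℝ} (ha : 0 < a) (hb : 0 < b)
    (hab : a + b = 1) (h : ∀ i j, X i j ≤ Y i j ^ a * Z i j ^ b) (k : ℕ) (i j : n) :
    (X ^ k) i j ≤ (Y ^ k) i j ^ a * (Z ^ k) i j ^ b := by
  induction k generalizing j with
  | zero => by_cases hij : i = j <;> simp [hij, ha.ne', hb.ne']
  | succ k ih =>
    simp only [pow_succ, mul_apply]
    refine le_trans (Finset.sum_le_sum fun l _ => ?_) (Real.sum_rpow_mul_rpow_le _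
      (fun l _ => mul_nonneg (pow_apply_nonneg hY k i l) (hY l j))
      (fun l _ => mul_nonneg (pow_apply_nonneg hZ k i l) (hZ l j)) ha hb hab)
    rw [Real.mul_rpow (pow_apply_nonneg hY k i l) (hY l j),
      Real.mul_rpow (pow_apply_nonneg hZ k i l) (hZ l j)]
    calc (X ^ k) i l * X l j ≤ ((Y ^ k) i l ^ a * (Z ^ k) i l ^ b) * (Y l j ^ a * Z l j ^ b) :=
          mul_le_mul (ih l) (h l j) (hX l j)
            (mul_nonneg (Real.rpow_nonneg (pow_apply_nonneg hY k i l) a)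
              (Real.rpow_nonneg (pow_apply_nonneg hZ k i l) b))
      _ = _ := by ring

lemma linfty_opNorm_pow_le_rpow_mul_rpow {X Y Z : Matrix n n ℝ} (hX : ∀ i j, 0 ≤ X i j)
    (hY : ∀ i j, 0 ≤ Y i j) (hZ : ∀ i j, 0 ≤ Z i j) {a b : ℝ} (ha : 0 < a) (hb : 0 < b)
    (hab : a + b = 1) (h : ∀ i j, X i j ≤ Y i j ^ a * Z i j ^ b) (k : ℕ) :
    ‖X ^ k‖ ≤ ‖Y ^ k‖ ^ a * ‖Z ^ k‖ ^ b := by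
  refine linfty_opNorm_le_of_sum_le (pow_apply_nonneg hX k) (by positivity) fun i => ?_
  have hYk : 0 ≤ ∑ j, (Y ^ k) i j := Finset.sum_nonneg fun j _ => pow_apply_nonneg hY k i j
  have hZk : 0 ≤ ∑ j, (Z ^ k) i j := Finset.sum_nonneg fun j _ => pow_apply_nonneg hZ k i j
  calc ∑ j, (X ^ k) i j ≤ ∑ j, (Y ^ k) i j ^ a * (Z ^ k) i j ^ b :=
        Finset.sum_le_sum fun j _ => pow_apply_le_rpow_mul_rpow hX hY hZ ha hb hab h k i j
    _ ≤ (∑ j, (Y ^ k) i j) ^ a * (∑ j, (Z ^ k) i j) ^ b :=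
        Real.sum_rpow_mul_rpow_le _ (fun j _ => pow_apply_nonneg hY k i j)
          (fun j _ => pow_apply_nonneg hZ k i j) ha hb hab
    _ ≤ ‖Y ^ k‖ ^ a * ‖Z ^ k‖ ^ b := by gcongr <;> exact sum_apply_le_linfty_opNorm _ i

end Entrywise

section ComplexSpectralRadius

variable {n : Type*} [Fintype n] [DecidableEq n]

def complexSpectralRadius (A : Matrix n n ℝ) : ℝ :=
  (spectralRadius ℂ (A.map ((↑) : ℝ → ℂ))).toReal

lemma complexSpectralRadius_nonneg (A : Matrix n n ℝ) : 0 ≤ A.complexSpectralRadius :=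
  ENNReal.toReal_nonneg

lemma spectralRadius_map_ofReal_ne_top (A : Matrix n n ℝ) :
    spectralRadius ℂ (A.map ((↑) : ℝ → ℂ)) ≠ ⊤ := by
  refine ne_top_of_le_ne_top ?_ (spectrum.spectralRadius_le_pow_nnnorm_pow_one_div ℂ _ 0)
  simpa using ENNReal.mul_ne_top ENNReal.coe_ne_top ENNReal.coe_ne_top

lemma tendsto_norm_pow_complexSpectralRadius (A : Matrix n n ℝ) :
    Tendsto (fun k : ℕ => ‖A ^ k‖ ^ (k⁻¹ : ℝ)) atTop (𝓝 A.complexSpectralRadius) := by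
  refine ((ENNReal.tendsto_toReal (spectralRadius_map_ofReal_ne_top A)).comp
    (spectrum.pow_nnnorm_pow_one_div_tendsto_nhds_spectralRadius _)).congr fun k => ?_
  have hpow : A.map ((↑) : ℝ → ℂ) ^ k = (A ^ k).map ((↑) : ℝ → ℂ) :=
    (map_pow Complex.ofRealHom.mapMatrix A k).symm
  simp [← ENNReal.toReal_rpow, hpow, linfty_opNorm_map_ofReal]

lemma complexSpectralRadius_mono {A B : Matrix n n ℝ} (hA : ∀ i j, 0 ≤ A i j)
    (hAB : ∀ i j, A i j ≤ B i j) : A.complexSpectralRadius ≤ B.complexSpectralRadius := by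
  refine le_of_tendsto_of_tendsto' (tendsto_norm_pow_complexSpectralRadius A)
    (tendsto_norm_pow_complexSpectralRadius B) fun k => ?_
  refine Real.rpow_le_rpow (norm_nonneg _) ?_ (by positivity)
  refine linfty_opNorm_le_of_sum_le (pow_apply_nonneg hA k) (norm_nonneg _) fun i => ?_
  exact (Finset.sum_le_sum fun j _ => pow_apply_le_pow_apply hA hAB k i j).trans
    (sum_apply_le_linfty_opNorm _ i)

lemma le_complexSpectralRadius_of_pow_le {A : Matrix n n ℝ} {t C : ℝ} (ht : 0 ≤ t) (hC : 0 < C)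
    (h : ∀ k : ℕ, t ^ k ≤ C * ‖A ^ k‖) : t ≤ A.complexSpectralRadius := by
  have hlim : Tendsto (fun k : ℕ => C ^ (k⁻¹ : ℝ) * ‖A ^ k‖ ^ (k⁻¹ : ℝ)) atTop
      (𝓝 A.complexSpectralRadius) := by
    have hC1 : Tendsto (fun k : ℕ => C ^ (k⁻¹ : ℝ)) atTop (𝓝 1) := by
      simpa using tendsto_const_nhds.rpow tendsto_inv_atTop_nhds_zero_nat (Or.inl hC.ne')
    simpa using hC1.mul (tendsto_norm_pow_complexSpectralRadius A)
  refine ge_of_tendsto hlim ?_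
  filter_upwards [eventually_ne_atTop 0] with k hk
  rw [← Real.mul_rpow hC.le (norm_nonneg _), ← Real.pow_rpow_inv_natCast ht hk]
  exact Real.rpow_le_rpow (pow_nonneg ht k) (h k) (by positivity)

lemma le_complexSpectralRadius_of_le_mulVec [Nonempty n] {A : Matrix n n ℝ}
    (hA : ∀ i j, 0 ≤ A i j) {z : n → ℝ} (hz : ∀ i, 0 < z i) {t : ℝ} (ht : 0 ≤ t)
    (h : ∀ i, t * z i ≤ (A *ᵥ z) i) : t ≤ A.complexSpectralRadius := by
  have hpow : ∀ k : ℕ, ∀ i, t ^ k * z i ≤ (A ^ k *ᵥ z) i := by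
    intro k
    induction k with
    | zero => simp
    | succ k ih =>
      intro i
      calc t ^ (k + 1) * z i = t ^ k * (t * z i) := by ring
        _ ≤ t ^ k * (A *ᵥ z) i := mul_le_mul_of_nonneg_left (h i) (pow_nonneg ht k)
        _ = (A *ᵥ (t ^ k • z)) i := by simp [mulVec_smul]
        _ ≤ (A *ᵥ (A ^ k *ᵥ z)) i := mulVec_apply_le_mulVec_apply hA (by simpa using ih) i
        _ = (A ^ (k + 1) *ᵥ z) i := by rw [mulVec_mulVec, pow_succ']
  obtain ⟨i⟩ := ‹Nonempty n›
  have hz0 : 0 < ‖z‖ := norm_pos_iff.2 fun h0 => (hz i).ne' (by simp [h0])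
  refine le_complexSpectralRadius_of_pow_le ht (div_pos hz0 (hz i)) fun k => ?_
  rw [div_mul_eq_mul_div, le_div_iff₀ (hz i)]
  calc t ^ k * z i ≤ (A ^ k *ᵥ z) i := hpow k i
    _ ≤ ‖A ^ k *ᵥ z‖ := (le_abs_self _).trans (norm_le_pi_norm (A ^ k *ᵥ z : n → ℝ) i)
    _ ≤ ‖A ^ k‖ * ‖z‖ := linfty_opNorm_mulVec _ _
    _ = ‖z‖ * ‖A ^ k‖ := mul_comm _ _

lemma mem_spectrum_iff_det_eq_zero {K : Type*} [Field K] {A : Matrix n n K} {t : K} :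
    t ∈ spectrum K A ↔ (t • (1 : Matrix n n K) - A).det = 0 := by
  rw [spectrum.mem_iff, Algebra.algebraMap_eq_smul_one, isUnit_iff_isUnit_det, isUnit_iff_ne_zero,
    not_not]

lemma mem_spectrum_iff_exists_mulVec_eq_smul_s7 {K : Type*} [Field K] {A : Matrix n n K} {t : K} :
    t ∈ spectrum K A ↔ ∃ v ≠ 0, A *ᵥ v = t • v := by
  simp_rw [mem_spectrum_iff_det_eq_zero, ← exists_mulVec_eq_zero_iff, sub_mulVec, smul_mulVec,
    one_mulVec, sub_eq_zero, eq_comm]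

lemma ofReal_mem_spectrum_map {A : Matrix n n ℝ} {t : ℝ} (ht : t ∈ spectrum ℝ A) :
    (t : ℂ) ∈ spectrum ℂ (A.map ((↑) : ℝ → ℂ)) := by
  rw [mem_spectrum_iff_det_eq_zero] at ht ⊢
  have hmap : (t : ℂ) • (1 : Matrix n n ℂ) - A.map ((↑) : ℝ → ℂ) =
      Complex.ofRealHom.mapMatrix (t • 1 - A) := by
    ext i j; by_cases h : i = j <;> simp [h]
  rw [hmap, ← RingHom.map_det, ht, map_zero]

lemma spectralRadius_le_spectralRadius_map_ofReal (A : Matrix n n ℝ) :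
    spectralRadius ℝ A ≤ spectralRadius ℂ (A.map ((↑) : ℝ → ℂ)) :=
  iSup₂_le fun t ht => le_iSup₂_of_le (f := fun (z : ℂ) _ => (‖z‖₊ : ℝ≥0∞)) (t : ℂ)
    (ofReal_mem_spectrum_map ht) (by simp)

theorem complexSpectralRadius_mem_spectrum_of_pos [Nonempty n] {B : Matrix n n ℝ}
    (hB : ∀ i j, 0 < B i j) : B.complexSpectralRadius ∈ spectrum ℝ B := by
  set ρ := B.complexSpectralRadius
  obtain ⟨μ, hμ, hμρ⟩ := spectrum.exists_nnnorm_eq_spectralRadius_of_nonempty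
    (spectrum.nonempty (B.map ((↑) : ℝ → ℂ)))
  obtain ⟨v, hv0, hBv⟩ := mem_spectrum_iff_exists_mulVec_eq_smul_s7.1 hμ
  set u : n → ℝ := fun i => ‖v i‖
  have hu : ∀ i, 0 ≤ u i := fun i => norm_nonneg _
  have hu0 : u ≠ 0 := fun h => hv0 (funext fun i => norm_eq_zero.1 (congr_fun h i))
  have hBu : ∀ i, ρ * u i ≤ (B *ᵥ u) i := by
    intro i
    have hρ : ρ = ‖μ‖ := by simp [ρ, complexSpectralRadius, ← hμρ]
    calc ρ * u i = ‖(B.map ((↑) : ℝ → ℂ) *ᵥ v) i‖ := by simp [hBv, hρ, u]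
      _ ≤ ∑ j, ‖(B i j : ℂ) * v j‖ := norm_sum_le _ _
      _ = (B *ᵥ u) i := by simp [mulVec, dotProduct, u, abs_of_pos (hB i _)]
  -- otherwise `B *ᵥ u` would satisfy the Collatz–Wielandt inequality for some value above `ρ`
  by_contra hρ
  have hne : B *ᵥ u ≠ ρ • u := fun h =>
    hρ (mem_spectrum_iff_exists_mulVec_eq_smul_s7.2 ⟨u, hu0, h⟩)
  set w := B *ᵥ u - ρ • u
  have hw : ∀ i, 0 ≤ w i := fun i => by simpa [w] using hBu i
  have hBw := mulVec_apply_pos_s7 hB hw (sub_ne_zero.2 hne)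
  obtain ⟨δ, hδ, hδ0⟩ : ∃ δ : ℝ, (∀ i, δ * (B *ᵥ u) i < (B *ᵥ w) i) ∧ 0 < δ := by
    have hsmall : ∀ᶠ δ in 𝓝[>] (0 : ℝ), ∀ i, δ * (B *ᵥ u) i < (B *ᵥ w) i :=
      Filter.eventually_all.2 fun i => ?_
    · exact (hsmall.and self_mem_nhdsWithin).exists
    have : Tendsto (fun δ : ℝ => δ * (B *ᵥ u) i) (𝓝 0) (𝓝 0) := by
      simpa using (continuous_mul_const ((B *ᵥ u) i)).tendsto 0
    exact nhdsWithin_le_nhds (this.eventually (gt_mem_nhds (hBw i)))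
  have hCW : ρ + δ ≤ ρ := by
    refine le_complexSpectralRadius_of_le_mulVec (fun i j => (hB i j).le)
      (mulVec_apply_pos_s7 hB hu hu0) (add_nonneg (complexSpectralRadius_nonneg B) hδ0.le)
      fun i => ?_
    have : B *ᵥ (B *ᵥ u) = ρ • (B *ᵥ u) + B *ᵥ w := by
      simp [w, mulVec_sub, mulVec_smul]
    rw [this]
    simpa [add_mul] using (hδ i).le
  linarith

theorem exists_mem_spectrum_complexSpectralRadius_le [Nonempty n] {A : Matrix n n ℝ}
    (hA : ∀ i j, 0 ≤ A i j) : ∃ t ∈ spectrum ℝ A, A.complexSpectralRadius ≤ t := by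
  set B : ℕ → Matrix n n ℝ := fun k => A + (1 / (k + 1 : ℝ)) • of fun _ _ => 1
  have hB : ∀ k i j, 0 < B k i j := fun k i j => by
    simpa [B] using add_pos_of_nonneg_of_pos (hA i j) (Nat.one_div_pos_of_nat (n := k))
  have hAB : ∀ k i j, A i j ≤ B k i j := fun k i j => by simp [B]; positivity
  have hanti : Antitone fun k => (B k).complexSpectralRadius := by
    refine antitone_nat_of_succ_le fun k => complexSpectralRadius_mono (fun i j => (hB _ i j).le)
      fun i j => ?_
    simp only [B, add_apply, smul_apply, of_apply, smul_eq_mul, mul_one, add_le_add_iff_left]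
    gcongr
    simp
  have hbdd : BddBelow (Set.range fun k => (B k).complexSpectralRadius) :=
    ⟨A.complexSpectralRadius, Set.forall_mem_range.2 fun k => complexSpectralRadius_mono hA (hAB k)⟩
  refine ⟨⨅ k, (B k).complexSpectralRadius, ?_,
    le_ciInf fun k => complexSpectralRadius_mono hA (hAB k)⟩
  have hBA : Tendsto B atTop (𝓝 A) := by
    have hε : Tendsto (fun k : ℕ => 1 / (k + 1 : ℝ)) atTop (𝓝 0) :=
      tendsto_one_div_add_atTop_nhds_zero_nat
    simpa only [zero_smul, add_zero] using
      (tendsto_const_nhds (x := A)).add (hε.smul_const (of fun (_ : n) (_ : n) => (1 : ℝ)))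
  have hdet : Continuous fun p : ℝ × Matrix n n ℝ => (p.1 • (1 : Matrix n n ℝ) - p.2).det := by
    fun_prop
  rw [mem_spectrum_iff_det_eq_zero]
  refine tendsto_nhds_unique
    ((hdet.tendsto _).comp ((tendsto_atTop_ciInf hanti hbdd).prodMk_nhds hBA))
    (tendsto_const_nhds.congr fun k => ?_)
  exact (mem_spectrum_iff_det_eq_zero.1 (complexSpectralRadius_mem_spectrum_of_pos (hB k))).symm

theorem spectralRadius_toReal_eq_complexSpectralRadius {A : Matrix n n ℝ}
    (hA : ∀ i j, 0 ≤ A i j) : (spectralRadius ℝ A).toReal = A.complexSpectralRadius := by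
  have hle := spectralRadius_le_spectralRadius_map_ofReal A
  have hfin := spectralRadius_map_ofReal_ne_top A
  refine le_antisymm (ENNReal.toReal_mono hfin hle) ?_
  rcases isEmpty_or_nonempty n with hn | hn
  · simp [complexSpectralRadius, spectralRadius, spectrum.of_subsingleton]
  obtain ⟨t, ht, htA⟩ := exists_mem_spectrum_complexSpectralRadius_le hA
  have ht' : (‖t‖₊ : ℝ≥0∞) ≤ spectralRadius ℝ A :=
    le_iSup₂ (f := fun (z : ℝ) _ => (‖z‖₊ : ℝ≥0∞)) t ht
  refine htA.trans ((le_abs_self t).trans ?_)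
  simpa using ENNReal.toReal_mono (ne_top_of_le_ne_top hfin hle) ht'

theorem tendsto_norm_pow_spectralRadius {A : Matrix n n ℝ} (hA : ∀ i j, 0 ≤ A i j) :
    Tendsto (fun k : ℕ => ‖A ^ k‖ ^ (k⁻¹ : ℝ)) atTop (𝓝 (spectralRadius ℝ A).toReal) := by
  simpa [spectralRadius_toReal_eq_complexSpectralRadius hA] using
    tendsto_norm_pow_complexSpectralRadius A

theorem spectralRadius_le_rpow_mul_rpow {X Y Z : Matrix n n ℝ} (hX : ∀ i j, 0 ≤ X i j)
    (hY : ∀ i j, 0 ≤ Y i j) (hZ : ∀ i j, 0 ≤ Z i j) {a b : ℝ} (ha : 0 < a) (hb : 0 < b)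
    (hab : a + b = 1) (h : ∀ i j, X i j ≤ Y i j ^ a * Z i j ^ b) :
    (spectralRadius ℝ X).toReal ≤
      (spectralRadius ℝ Y).toReal ^ a * (spectralRadius ℝ Z).toReal ^ b := by
  refine le_of_tendsto_of_tendsto' (tendsto_norm_pow_spectralRadius hX)
    (((tendsto_norm_pow_spectralRadius hY).rpow_const (Or.inr ha.le)).mul
      ((tendsto_norm_pow_spectralRadius hZ).rpow_const (Or.inr hb.le))) fun k => ?_
  calc ‖X ^ k‖ ^ (k⁻¹ : ℝ) ≤ (‖Y ^ k‖ ^ a * ‖Z ^ k‖ ^ b) ^ (k⁻¹ : ℝ) := by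
        gcongr; exact linfty_opNorm_pow_le_rpow_mul_rpow hX hY hZ ha hb hab h k
    _ = _ := by
      rw [Real.mul_rpow (by positivity) (by positivity), ← Real.rpow_mul (norm_nonneg _),
        ← Real.rpow_mul (norm_nonneg _), ← Real.rpow_mul (norm_nonneg _),
        ← Real.rpow_mul (norm_nonneg _), mul_comm a, mul_comm b]

end ComplexSpectralRadius

end Matrix

section PiMat

variable {M : ℕ} {r : Fin M → ℝ} {P : Matrix (Fin M) (Fin M) ℝ}

lemma piMat_apply_nonneg (hP : ∀ i j, 0 ≤ P i j) (θ : ℝ) (i j : Fin M) : 0 ≤ PiMat r θ P i j :=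
  mul_nonneg (hP i j) (Real.exp_pos _).le

lemma piMat_apply_eq_rpow_mul_rpow (hP : ∀ i j, 0 ≤ P i j) {a b : ℝ} (hab : a + b = 1)
    (θ₁ θ₂ : ℝ) (i j : Fin M) :
    PiMat r (a * θ₁ + b * θ₂) P i j = PiMat r θ₁ P i j ^ a * PiMat r θ₂ P i j ^ b := by
  simp only [PiMat, of_apply]
  rw [Real.mul_rpow (hP i j) (Real.exp_pos _).le, Real.mul_rpow (hP i j) (Real.exp_pos _).le,
    ← Real.exp_mul, ← Real.exp_mul]
  calc P i j * Real.exp ((a * θ₁ + b * θ₂) * r j)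
      = P i j ^ (a + b) * Real.exp (θ₁ * r j * a + θ₂ * r j * b) := by
        rw [hab, Real.rpow_one]; ring_nf
    _ = _ := by rw [Real.rpow_add' (hP i j) (by simp [hab]), Real.exp_add]; ring

end PiMat

theorem stmt7_general (M : ℕ) (r : Fin M → ℝ)
    (P : Matrix (Fin M) (Fin M) ℝ) (hP : ∀ i j, 0 ≤ P i j) :
    ConvexOn ℝ Set.univ (fun θ : ℝ => LambdaA r θ P) :=
  convexOn_log_of_le_rpow_mul_rpow (fun _ => ENNReal.toReal_nonneg) fun θ₁ θ₂ _ _ ha hb hab =>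
    Matrix.spectralRadius_le_rpow_mul_rpow (piMat_apply_nonneg hP _) (piMat_apply_nonneg hP _)
      (piMat_apply_nonneg hP _) ha hb hab fun i j =>
        (piMat_apply_eq_rpow_mul_rpow hP hab θ₁ θ₂ i j).le

theorem stmt7 (M : ℕ) (hM : 2 ≤ M) (r : Fin M → ℝ)
    (P : Matrix (Fin M) (Fin M) ℝ) (hP : ∀ i j, 0 ≤ P i j) :
    ConvexOn ℝ Set.univ (fun θ : ℝ => LambdaA r θ P) :=
  stmt7_general M r P hP
end
end

section
/- The set I_1 is not convex in general for M = 3: there exist irreducible row-stochastic 3×3 matrices Ξ₁ and Ξ₂, arrival rates r ∈ ℝ³ with nonnegative entries, a service rate c > 0, and α ∈ (0,1), such that m(Ξ₁) < c and m(Ξ₂) < c, the matrix α·Ξ₁ + (1−α)·Ξ₂ is irreducible and row-stochastic, and m(α·Ξ₁ + (1−α)·Ξ₂) > c. (Explicit witnesses: Ξ₁ with rows (0.2,0.6,0.2), (0.6,0.2,0.2), (0.2,0.4,0.4); Ξ₂ with rows (0.7,0.1,0.2), (0.2,0.1,0.7), (0.3,0.6,0.1); r = (0.2, 1.0, 2.5).)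 -/
/-! The stationary distribution, hence the mean arrival rate `m(P) = π_P ⬝ r`, depends
nonlinearly on `P`, so `m` need not be quasiconvex along segments. For the witnesses below,
`m(Ξ₁) = 61/56 ≈ 1.089` and `m(Ξ₂) = 913/850 ≈ 1.074`, while at the midpoint
`m = 337/294 ≈ 1.146`; the service rate `c = 11/10` separates these values. All three
matrices have positive entries, so irreducibility is immediate. -/

open scoped BigOperators Classical
open Filter

noncomputable section

theorem isIrreducibleMat_of_pos {M : ℕ} {P : Matrix (Fin M) (Fin M) ℝ}
    (hP : ∀ i j, 0 < P i j) : IsIrreducibleMat P :=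
  fun i j => ⟨1, le_rfl, by simpa using hP i j⟩

theorem IsRowStochastic.smul_add_one_sub_smul {M : ℕ} {P Q : Matrix (Fin M) (Fin M) ℝ}
    (hP : IsRowStochastic P) (hQ : IsRowStochastic Q) {α : ℝ} (h₀ : 0 ≤ α) (h₁ : α ≤ 1) :
    IsRowStochastic (α • P + (1 - α) • Q) := by
  refine ⟨fun i j => ?_, fun i => ?_⟩
  · have := hP.1 i j
    have := hQ.1 i j
    simp only [Matrix.add_apply, Matrix.smul_apply, smul_eq_mul]
    nlinarith
  · simp only [Matrix.add_apply, Matrix.smul_apply, smul_eq_mul, Finset.sum_add_distrib,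
      ← Finset.mul_sum, hP.2 i, hQ.2 i]
    ring

def xi₁ : Matrix (Fin 3) (Fin 3) ℝ := !![1/5, 3/5, 1/5; 3/5, 1/5, 1/5; 1/5, 2/5, 2/5]

def xi₂ : Matrix (Fin 3) (Fin 3) ℝ := !![7/10, 1/10, 1/5; 1/5, 1/10, 7/10; 3/10, 3/5, 1/10]

def xiMid : Matrix (Fin 3) (Fin 3) ℝ := !![9/20, 7/20, 1/5; 2/5, 3/20, 9/20; 1/4, 1/2, 1/4]

def arrivalRate : Fin 3 → ℝ := ![1/5, 1, 5/2]

theorem half_smul_xi₁_add_half_smul_xi₂ : (1/2 : ℝ) • xi₁ + (1 - 1/2 : ℝ) • xi₂ = xiMid := by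
  ext i j
  fin_cases i <;> fin_cases j <;> norm_num [xi₁, xi₂, xiMid]

theorem xi₁_pos : ∀ i j, 0 < xi₁ i j := by
  intro i j; fin_cases i <;> fin_cases j <;> norm_num [xi₁]

theorem xi₂_pos : ∀ i j, 0 < xi₂ i j := by
  intro i j; fin_cases i <;> fin_cases j <;> norm_num [xi₂]

theorem xiMid_pos : ∀ i j, 0 < xiMid i j := by
  intro i j; fin_cases i <;> fin_cases j <;> norm_num [xiMid]

theorem isRowStochastic_xi₁ : IsRowStochastic xi₁ :=
  ⟨fun i j => (xi₁_pos i j).le, fun i => by fin_cases i <;> norm_num [xi₁, Fin.sum_univ_succ]⟩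

theorem isRowStochastic_xi₂ : IsRowStochastic xi₂ :=
  ⟨fun i j => (xi₂_pos i j).le, fun i => by fin_cases i <;> norm_num [xi₂, Fin.sum_univ_succ]⟩

theorem isStationaryDist_xi₁ : IsStationaryDist xi₁ ![5/14, 11/28, 1/4] :=
  ⟨fun i => by fin_cases i <;> norm_num, by norm_num [Fin.sum_univ_succ],
    fun j => by fin_cases j <;> norm_num [xi₁, Fin.sum_univ_succ]⟩

theorem isStationaryDist_xi₂ : IsStationaryDist xi₂ ![39/85, 21/85, 5/17] :=
  ⟨fun i => by fin_cases i <;> norm_num, by norm_num [Fin.sum_univ_succ],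
    fun j => by fin_cases j <;> norm_num [xi₂, Fin.sum_univ_succ]⟩

theorem isStationaryDist_xiMid : IsStationaryDist xiMid ![55/147, 145/441, 131/441] :=
  ⟨fun i => by fin_cases i <;> norm_num, by norm_num [Fin.sum_univ_succ],
    fun j => by fin_cases j <;> norm_num [xiMid, Fin.sum_univ_succ]⟩

theorem stmt18 :
    ∃ (Ξ₁ Ξ₂ : Matrix (Fin 3) (Fin 3) ℝ) (r : Fin 3 → ℝ) (c : ℝ) (α : ℝ),
      (∀ j, 0 ≤ r j) ∧ 0 < c ∧ 0 < α ∧ α < 1 ∧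
      IsRowStochastic Ξ₁ ∧ IsIrreducibleMat Ξ₁ ∧
      IsRowStochastic Ξ₂ ∧ IsIrreducibleMat Ξ₂ ∧
      (∃ π₁ : Fin 3 → ℝ, IsStationaryDist Ξ₁ π₁ ∧ ∑ i, π₁ i * r i < c) ∧
      (∃ π₂ : Fin 3 → ℝ, IsStationaryDist Ξ₂ π₂ ∧ ∑ i, π₂ i * r i < c) ∧
      IsRowStochastic (α • Ξ₁ + (1 - α) • Ξ₂) ∧
      IsIrreducibleMat (α • Ξ₁ + (1 - α) • Ξ₂) ∧
      ∃ π : Fin 3 → ℝ, IsStationaryDist (α • Ξ₁ + (1 - α) • Ξ₂) π ∧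
        c < ∑ i, π i * r i := by
  refine ⟨xi₁, xi₂, arrivalRate, 11/10, 1/2, fun j => by fin_cases j <;> norm_num [arrivalRate],
    by norm_num, by norm_num, by norm_num,
    isRowStochastic_xi₁, isIrreducibleMat_of_pos xi₁_pos,
    isRowStochastic_xi₂, isIrreducibleMat_of_pos xi₂_pos,
    ⟨_, isStationaryDist_xi₁, ?_⟩, ⟨_, isStationaryDist_xi₂, ?_⟩,
    isRowStochastic_xi₁.smul_add_one_sub_smul isRowStochastic_xi₂ (by norm_num) (by norm_num),
    ?_, ⟨![55/147, 145/441, 131/441], ?_, ?_⟩⟩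
  · norm_num [arrivalRate, Fin.sum_univ_succ]
  · norm_num [arrivalRate, Fin.sum_univ_succ]
  · exact half_smul_xi₁_add_half_smul_xi₂ ▸ isIrreducibleMat_of_pos xiMid_pos
  · exact half_smul_xi₁_add_half_smul_xi₂ ▸ isStationaryDist_xiMid
  · norm_num [arrivalRate, Fin.sum_univ_succ]
end
end
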